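/- Let ME = (Q,T) be the mutual exclusion parameterized system and Φ_ME its first-order encoding (the set Φ_P for P = ME with initial local state q₀ = green). If a configuration c ∈ Q* is reachable in ME, i.e. green^n →*_ME c for some n, then R(t_c) is a semantic consequence of Φ_ME, i.e. R(t_c) holds in every first-order structure satisfying all formulas of Φ_ME. -/
import Mathlib


/-- Guards of conditional transition rules: `∀_I J` or `∃_I J` with `I ∈ {L, R, LR}`. -/
inductive Guard (Q : Type) : Type
  | forallL (J : Set Q)
  | forallR (J : Set Q)
  | forallLR (J : Set Q)
  | existsL (J : Set Q)
  | existsR (J : Set Q)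
  | existsLR (J : Set Q)

/-- A transition rule of a parameterized system: an optional guard, a source
local state and a target local state. -/
structure Rule (Q : Type) : Type where
  guard : Option (Guard Q)
  src : Q
  tgt : Q

/-- Satisfaction of a guard at a position whose strict left context is `u` and
strict right context is `v`. -/
def GuardSat {Q : Type} (g : Guard Q) (u v : List Q) : Prop :=
  match g with
  | .forallL J => ∀ q ∈ u, q ∈ J
  | .forallR J => ∀ q ∈ v, q ∈ J
  | .forallLR J => (∀ q ∈ u, q ∈ J) ∧ (∀ q ∈ v, q ∈ J)
  | .existsL J => ∃ q ∈ u, q ∈ J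
  | .existsR J => ∃ q ∈ v, q ∈ J
  | .existsLR J => (∃ q ∈ u, q ∈ J) ∨ (∃ q ∈ v, q ∈ J)

/-- One-step transition relation `→_P` of the parameterized system with rules `T`. -/
def Step {Q : Type} (T : Set (Rule Q)) (c c' : List Q) : Prop :=
  ∃ r ∈ T, ∃ u v : List Q,
    c = u ++ r.src :: v ∧ c' = u ++ r.tgt :: v ∧
      ∀ g, r.guard = some g → GuardSat g u v

/-- Reachability `→*_P`: the reflexive-transitive closure of `→_P`. -/
def Reach {Q : Type} (T : Set (Rule Q)) : List Q → List Q → Prop :=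
  Relation.ReflTransGen (Step T)

/-- Interpretation `[t_c]` of the closed term `t_c = c₁ * ⋯ * cₙ` (with `t_ε = e`)
in a structure with domain `M`, binary operation `mul`, constants `e` and `cq q`. -/
def wordVal {Q M : Type} (mul : M → M → M) (e : M) (cq : Q → M) : List Q → M
  | [] => e
  | [q] => cq q
  | q :: q' :: rest => mul (cq q) (wordVal mul e cq (q' :: rest))

/-- The set `J` of a universal guard (if any). -/
def univGuardSet {Q : Type} (g : Guard Q) : Option (Set Q) :=
  match g with
  | .forallL J => some J
  | .forallR J => some J
  | .forallLR J => some J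
  | _ => none

/-- The (universal closure of the) axiom of `Φ_P` corresponding to a single
transition rule, interpreted in a first-order structure with domain `M`. -/
def RuleAx {Q M : Type} (mul : M → M → M) (cq : Q → M)
    (R : M → Prop) (PJ : Set Q → M → Prop) (r : Rule Q) : Prop :=
  match r.guard with
  | none =>
      ∀ x y, R (mul (mul x (cq r.src)) y) → R (mul (mul x (cq r.tgt)) y)
  | some (.forallL J) =>
      ∀ x y, R (mul (mul x (cq r.src)) y) ∧ PJ J x → R (mul (mul x (cq r.tgt)) y)
  | some (.forallR J) =>
      ∀ x y, R (mul (mul x (cq r.src)) y) ∧ PJ J y → R (mul (mul x (cq r.tgt)) y)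
  | some (.forallLR J) =>
      ∀ x y, R (mul (mul x (cq r.src)) y) ∧ PJ J x ∧ PJ J y →
        R (mul (mul x (cq r.tgt)) y)
  | some (.existsL J) =>
      ∀ q ∈ J, ∀ x y z w,
        R (mul (mul x (cq r.src)) y) ∧ x = mul (mul z (cq q)) w →
          R (mul (mul x (cq r.tgt)) y)
  | some (.existsR J) =>
      ∀ q ∈ J, ∀ x y z w,
        R (mul (mul x (cq r.src)) y) ∧ y = mul (mul z (cq q)) w →
          R (mul (mul x (cq r.tgt)) y)
  | some (.existsLR J) =>
      ∀ q ∈ J, ∀ x y z w,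
        R (mul (mul x (cq r.src)) y) ∧
            (x = mul (mul z (cq q)) w ∨ y = mul (mul z (cq q)) w) →
          R (mul (mul x (cq r.tgt)) y)

/-- A first-order structure (domain `M`, operation `mul`, constants `e`, `cq q`,
predicates `In`, `R`, `P^J`) satisfies all formulas of the encoding `Φ_P` of the
parameterized system with rules `T` and initial local state `q0`. -/
def SatPhi {Q M : Type} (T : Set (Rule Q)) (q0 : Q)
    (mul : M → M → M) (e : M) (cq : Q → M)
    (In R : M → Prop) (PJ : Set Q → M → Prop) : Prop :=
  (∀ x y z : M, mul (mul x y) z = mul x (mul y z)) ∧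
  (∀ x : M, mul e x = x) ∧
  (∀ x : M, mul x e = x) ∧
  In e ∧
  (∀ x, In x → In (mul x (cq q0))) ∧
  (∀ x, In x → R x) ∧
  (∀ J : Set Q, (∃ r ∈ T, ∃ g, r.guard = some g ∧ univGuardSet g = some J) →
      PJ J e ∧ ∀ q ∈ J, ∀ x, PJ J x → PJ J (mul x (cq q))) ∧
  (∀ r ∈ T, RuleAx mul cq R PJ r)

/-- The local states of the mutual exclusion system `ME`. -/
inductive MEState : Type
  | green | black | blue | red
deriving DecidableEq

/-- The transition rules of the mutual exclusion system `ME`. -/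
def MET : Set (Rule MEState) :=
  { ⟨some (.forallLR {MEState.green, MEState.black}), MEState.green, MEState.black⟩,
    ⟨none, MEState.black, MEState.blue⟩,
    ⟨some (.existsL {MEState.black, MEState.blue, MEState.red}), MEState.blue, MEState.blue⟩,
    ⟨some (.forallL {MEState.green}), MEState.blue, MEState.red⟩,
    ⟨none, MEState.red, MEState.black⟩,
    ⟨none, MEState.black, MEState.green⟩ }

/-- adequacy of the encoding for `ME`: if a configuration `c`
is reachable in `ME` from an initial configuration `green^n`, then `R(t_c)`
holds in every first-order structure satisfying all formulas of `Φ_ME`. -/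
theorem me_adequacy (n : ℕ) (c : List MEState)
    (hreach : Reach MET (List.replicate n MEState.green) c)
    (M : Type) (mul : M → M → M) (e : M) (cq : MEState → M)
    (In R : M → Prop) (PJ : Set MEState → M → Prop)
    (hPhi : SatPhi MET MEState.green mul e cq In R PJ) :
    R (wordVal mul e cq c) := by
  obtain ⟨hassoc, hle, hre, hIne, hIncl, hInR, hPJcl, hrules⟩ := hPhi
  set val := wordVal mul e cq with hval
  have hcons : ∀ (a : MEState) (l : List MEState), val (a :: l) = mul (cq a) (val l) := by
    intro a l
    cases l with
    | nil => simp [hval, wordVal, hre]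
    | cons b t => simp [hval, wordVal]
  have happ : ∀ u v : List MEState, val (u ++ v) = mul (val u) (val v) := by
    intro u
    induction u with
    | nil => intro v; simp [hval, wordVal, hle]
    | cons a t ih => intro v; rw [List.cons_append, hcons, hcons, ih, hassoc]
  have hsnoc : ∀ (u : List MEState) q, val (u ++ [q]) = mul (val u) (cq q) := by
    intro u q; rw [happ]; simp [hval, wordVal]
  have hdec : ∀ (u : List MEState) q v,
      val (u ++ q :: v) = mul (mul (val u) (cq q)) (val v) := by
    intro u q v; rw [happ u (q :: v), hcons, hassoc]
  have hPJ : ∀ (J : Set MEState),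
      (PJ J e ∧ ∀ q ∈ J, ∀ x, PJ J x → PJ J (mul x (cq q))) →
      ∀ u : List MEState, (∀ q ∈ u, q ∈ J) → PJ J (val u) := by
    intro J hJ u
    induction u using List.reverseRecOn with
    | nil => intro _; simpa [hval, wordVal] using hJ.1
    | append_singleton t a ih =>
      intro h
      rw [hsnoc]
      exact hJ.2 a (h a (by simp)) _ (ih fun q hq => h q (by simp [hq]))
  have hbase : ∀ m, In (val (List.replicate m MEState.green)) := by
    intro m
    induction m with
    | zero => simpa [hval, wordVal] using hIne
    | succ k ih =>
      rw [List.replicate_succ', hsnoc]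
      exact hIncl _ ih
  have hstepR : ∀ c c', Step MET c c' → R (val c) → R (val c') := by
    intro c c' hs hR
    obtain ⟨r, hr, u, v, hc, hc', hg⟩ := hs
    subst hc; subst hc'
    rw [hdec] at hR ⊢
    have hax := hrules r hr
    simp only [MET, Set.mem_insert_iff, Set.mem_singleton_iff] at hr
    rcases hr with hr | hr | hr | hr | hr | hr <;> subst hr <;>
      simp only [RuleAx] at hax
    · -- ∀_LR {green, black} : green → black
      have htrig := hPJcl {MEState.green, MEState.black}
        ⟨⟨some (.forallLR {MEState.green, MEState.black}), MEState.green, MEState.black⟩,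
          by simp [MET], _, rfl, rfl⟩
      have hgs := hg _ rfl
      exact hax (val u) (val v) ⟨hR, hPJ _ htrig u hgs.1, hPJ _ htrig v hgs.2⟩
    · exact hax (val u) (val v) hR
    · -- ∃_L {black, blue, red} : blue → blue
      obtain ⟨q, hqu, hqJ⟩ := hg _ rfl
      obtain ⟨a, b, hab⟩ := List.append_of_mem hqu
      exact hax q hqJ (val u) (val v) (val a) (val b) ⟨hR, by rw [hab, hdec]⟩
    · -- ∀_L {green} : blue → red
      have htrig := hPJcl {MEState.green}
        ⟨⟨some (.forallL {MEState.green}), MEState.blue, MEState.red⟩,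
          by simp [MET], _, rfl, rfl⟩
      exact hax (val u) (val v) ⟨hR, hPJ _ htrig u (hg _ rfl)⟩
    · exact hax (val u) (val v) hR
    · exact hax (val u) (val v) hR
  induction hreach with
  | refl => exact hInR _ (hbase n)
  | tail _ hstep ih => exact hstepR _ _ hstep ih
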